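/- Let K ≥ 2 be a natural number, let k' ∈ Fin K, let p : Fin K → ℝ satisfy p(k) > 0 for all k and ∑ₖ p(k) = 1, with p(k') < 1. Set μ = (1 − p(k'))/(K−1), δ(k) = p(k) − μ for k ≠ k', and v = (1/(K−1))·∑_{k≠k'} δ(k)². Assume there exists ρ ∈ (0,1) with |δ(k)| ≤ ρ·μ for all k ≠ k'. Then, with the adaptive smoothing weight ε = μ, | (−log p(k') − μ·∑_{k≠k'} log p(k)) − (−log p(k') − (1−p(k'))·log μ + ((K−1)² / (2·(1−p(k'))))·v) | ≤ (K−1)^{3/2}·v^{3/2} / (3·(1−ρ)³·μ²). -/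

import Mathlib

/-!
Write `p k = μ + δ k` for the residual classes. Since the `δ k` sum to zero, the first-order
terms of `log (μ + δ k) = log μ + δ k / μ - δ k ^ 2 / (2 μ ^ 2) + r (δ k / μ)` cancel in the
sum, and the second-order terms add up to the RCV penalty. The cubic remainders satisfy
`|r x| ≤ |x| ^ 3 / (3 (1 - ρ))` for `|x| ≤ ρ < 1`, and `∑ |δ k| ^ 3 ≤ (∑ δ k ^ 2) ^ (3/2)`.
-/

open Finset Real

lemma monotoneOn_of_hasDerivAt_nonneg {D : Set ℝ} (hD : Convex ℝ D) {f f' : ℝ → ℝ}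
    (hf : ∀ x ∈ D, HasDerivAt f (f' x) x) (hf' : ∀ x ∈ D, 0 ≤ f' x) : MonotoneOn f D :=
  monotoneOn_of_hasDerivWithinAt_nonneg hD
    (fun x hx => (hf x hx).continuousAt.continuousWithinAt)
    (fun x hx => (hf x (interior_subset hx)).hasDerivWithinAt)
    (fun x hx => hf' x (interior_subset hx))

lemma hasDerivAt_log_one_add_sub_self_add_sq_div_two {x : ℝ} (hx : -1 < x) :
    HasDerivAt (fun t => log (1 + t) - t + t ^ 2 / 2) (x ^ 2 / (1 + x)) x := by
  have h1x : 1 + x ≠ 0 := by linarith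
  have hlog : HasDerivAt (fun t => log (1 + t)) (1 / (1 + x)) x := by
    simpa using ((hasDerivAt_id x).const_add 1).log h1x
  refine ((hlog.sub (hasDerivAt_id x)).add ((hasDerivAt_pow 2 x).div_const 2)).congr_deriv ?_
  field_simp
  ring

/-- Both `f` and `x ^ 3 / (3 (1 - ρ)) - f` are monotone on `[-ρ, ∞)`, as `f' x = x ^ 2 / (1 + x)`
and `1 + x ≥ 1 - ρ` there; `f 0 = 0` then gives the bound on either side of `0`. -/
lemma abs_log_one_add_sub_self_add_sq_div_two_le {ρ x : ℝ} (hρ : ρ < 1) (hx : |x| ≤ ρ) :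
    |log (1 + x) - x + x ^ 2 / 2| ≤ |x| ^ 3 / (3 * (1 - ρ)) := by
  set f : ℝ → ℝ := fun t => log (1 + t) - t + t ^ 2 / 2
  set g : ℝ → ℝ := fun t => t ^ 3 / (3 * (1 - ρ)) - f t
  have hf_deriv : ∀ t ∈ Set.Ici (-ρ), HasDerivAt f (t ^ 2 / (1 + t)) t := fun t ht =>
    hasDerivAt_log_one_add_sub_self_add_sq_div_two (by linarith [ht.out])
  have hf_mono : MonotoneOn f (Set.Ici (-ρ)) :=
    monotoneOn_of_hasDerivAt_nonneg (convex_Ici _) hf_deriv fun t ht =>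
      div_nonneg (sq_nonneg t) (by linarith [ht.out])
  have hg_mono : MonotoneOn g (Set.Ici (-ρ)) := by
    refine monotoneOn_of_hasDerivAt_nonneg (f' := fun t => t ^ 2 / (1 - ρ) - t ^ 2 / (1 + t))
      (convex_Ici _) (fun t ht => ?_) (fun t ht => ?_)
    · refine (((hasDerivAt_pow 3 t).div_const (3 * (1 - ρ))).sub (hf_deriv t ht)).congr_deriv ?_
      have : 1 - ρ ≠ 0 := by linarith
      field_simp
      ring
    · exact sub_nonneg.mpr
        (div_le_div_of_nonneg_left (sq_nonneg t) (by linarith) (by linarith [ht.out]))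
  have hx_mem : x ∈ Set.Ici (-ρ) := (neg_le_of_abs_le hx : -ρ ≤ x)
  have h0_mem : (0 : ℝ) ∈ Set.Ici (-ρ) := neg_nonpos.mpr ((abs_nonneg x).trans hx)
  have hf0 : f 0 = 0 := by simp [f]
  have hg0 : g 0 = 0 := by simp [g, hf0]
  rcases le_or_gt 0 x with hx0 | hx0
  · have hf := hf_mono h0_mem hx_mem hx0
    have hg := hg_mono h0_mem hx_mem hx0
    simp only [hf0, hg0, g, sub_nonneg] at hf hg
    rw [abs_of_nonneg hf, abs_of_nonneg hx0]
    exact hg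
  · have hf := hf_mono hx_mem h0_mem hx0.le
    have hg := hg_mono hx_mem h0_mem hx0.le
    simp only [hf0, hg0, g, sub_nonpos] at hf hg
    rw [abs_of_nonpos hf, abs_of_neg hx0, Odd.neg_pow (by decide), neg_div]
    linarith

lemma abs_mul_log_add_sub_le {μ ρ d : ℝ} (hμ : 0 < μ) (hρ : ρ < 1) (hd : |d| ≤ ρ * μ) :
    |μ * log (μ + d) - μ * log μ - d + d ^ 2 / (2 * μ)| ≤ |d| ^ 3 / (3 * (1 - ρ) * μ ^ 2) := by
  have hx : |d / μ| ≤ ρ := by rwa [abs_div, abs_of_pos hμ, div_le_iff₀ hμ]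
  have h1x : 0 < 1 + d / μ := by linarith [neg_abs_le (d / μ)]
  have hlog : log (μ + d) = log μ + log (1 + d / μ) := by
    rw [← log_mul hμ.ne' h1x.ne', mul_add, mul_div_cancel₀ _ hμ.ne', mul_one]
  calc |μ * log (μ + d) - μ * log μ - d + d ^ 2 / (2 * μ)|
      = μ * |log (1 + d / μ) - d / μ + (d / μ) ^ 2 / 2| := by
        rw [← abs_of_pos hμ, ← abs_mul, abs_of_pos hμ, hlog]
        congr 1
        field_simp
        ring
    _ ≤ μ * (|d / μ| ^ 3 / (3 * (1 - ρ))) :=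
        mul_le_mul_of_nonneg_left (abs_log_one_add_sub_self_add_sq_div_two_le hρ hx) hμ.le
    _ = |d| ^ 3 / (3 * (1 - ρ) * μ ^ 2) := by
        rw [abs_div, abs_of_pos hμ]
        field_simp

lemma abs_mul_sum_log_add_sub_le {ι : Type*} (s : Finset ι) {μ ρ : ℝ} {δ : ι → ℝ}
    (hμ : 0 < μ) (hρ : ρ < 1) (hδ : ∀ k ∈ s, |δ k| ≤ ρ * μ) (hsum : ∑ k ∈ s, δ k = 0) :
    |μ * ∑ k ∈ s, log (μ + δ k) - (#s * μ * log μ - (∑ k ∈ s, δ k ^ 2) / (2 * μ))| ≤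
      (∑ k ∈ s, |δ k| ^ 3) / (3 * (1 - ρ) * μ ^ 2) := by
  have hexpand : μ * ∑ k ∈ s, log (μ + δ k) - (#s * μ * log μ - (∑ k ∈ s, δ k ^ 2) / (2 * μ)) =
      ∑ k ∈ s, (μ * log (μ + δ k) - μ * log μ - δ k + δ k ^ 2 / (2 * μ)) := by
    simp only [sum_add_distrib, sum_sub_distrib, ← mul_sum, ← sum_div, hsum, sum_const,
      nsmul_eq_mul]
    ring
  rw [hexpand, sum_div]
  exact (abs_sum_le_sum_abs _ _).trans
    (sum_le_sum fun k hk => abs_mul_log_add_sub_le hμ hρ (hδ k hk))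

lemma sum_abs_pow_three_le_rpow {ι : Type*} (s : Finset ι) (a : ι → ℝ) :
    ∑ k ∈ s, |a k| ^ 3 ≤ (∑ k ∈ s, a k ^ 2) ^ ((3 : ℝ) / 2) := by
  set T := ∑ k ∈ s, a k ^ 2
  have hT : 0 ≤ T := sum_nonneg fun k _ => sq_nonneg (a k)
  have habs : ∀ k ∈ s, |a k| ≤ √T := fun k hk => by
    rw [← sqrt_sq_eq_abs]
    exact sqrt_le_sqrt (single_le_sum (fun j _ => sq_nonneg (a j)) hk)
  calc ∑ k ∈ s, |a k| ^ 3 = ∑ k ∈ s, a k ^ 2 * |a k| := by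
        refine sum_congr rfl fun k _ => ?_
        rw [← sq_abs (a k)]
        ring
    _ ≤ ∑ k ∈ s, a k ^ 2 * √T :=
        sum_le_sum fun k hk => mul_le_mul_of_nonneg_left (habs k hk) (sq_nonneg _)
    _ = T ^ ((3 : ℝ) / 2) := by
        rw [← sum_mul, show (3 : ℝ) / 2 = 1 + 1 / 2 by norm_num, rpow_add' hT (by norm_num),
          rpow_one, sqrt_eq_rpow]

theorem adaptive_ce_decomposition_general (K : ℕ) (hK : 2 ≤ K) (k' : Fin K) (p : Fin K → ℝ)
    (hsum : ∑ k, p k = 1) (hlt : p k' < 1)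
    (ρ : ℝ) (hρ : ρ ∈ Set.Ioo (0 : ℝ) 1)
    (μ : ℝ) (hμ : μ = (1 - p k') / ((K : ℝ) - 1))
    (δ : Fin K → ℝ) (hδ : ∀ k, δ k = p k - μ)
    (v : ℝ) (hv : v = (1 / ((K : ℝ) - 1)) * ∑ k ∈ Finset.univ.erase k', δ k ^ 2)
    (hbound : ∀ k ∈ Finset.univ.erase k', |δ k| ≤ ρ * μ) :
    |(-Real.log (p k') - μ * ∑ k ∈ Finset.univ.erase k', Real.log (p k)) -
      (-Real.log (p k') - (1 - p k') * Real.log μ +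
        (((K : ℝ) - 1) ^ 2 / (2 * (1 - p k'))) * v)| ≤
      ((K : ℝ) - 1) ^ ((3 : ℝ) / 2) * v ^ ((3 : ℝ) / 2) /
        (3 * (1 - ρ) ^ 3 * μ ^ 2) := by
  have hK1 : (0 : ℝ) < K - 1 := by
    have : (2 : ℝ) ≤ K := by exact_mod_cast hK
    linarith
  have hμ0 : 0 < μ := by rw [hμ]; exact div_pos (by linarith) hK1
  have hμK : 1 - p k' = (K - 1) * μ := by rw [hμ]; field_simp
  have hcard : (#(univ.erase k') : ℝ) = K - 1 := by
    rw [card_erase_of_mem (mem_univ k'), card_univ, Fintype.card_fin,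
      Nat.cast_sub (by omega), Nat.cast_one]
  have hδsum : ∑ k ∈ univ.erase k', δ k = 0 := by
    rw [sum_congr rfl fun k _ => hδ k, sum_sub_distrib, sum_erase_eq_sub (mem_univ k'), hsum,
      sum_const, nsmul_eq_mul, hcard, hμK]
    ring
  have hδsq : ∑ k ∈ univ.erase k', δ k ^ 2 = (K - 1) * v := by rw [hv]; field_simp
  have hv0 : 0 ≤ v :=
    nonneg_of_mul_nonneg_right (hδsq ▸ sum_nonneg fun k _ => sq_nonneg (δ k)) hK1
  have hlog : ∑ k ∈ univ.erase k', log (p k) = ∑ k ∈ univ.erase k', log (μ + δ k) :=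
    sum_congr rfl fun k _ => by rw [hδ]; ring_nf
  have h1ρ : 0 < 1 - ρ := by linarith [hρ.2]
  calc _ = |μ * ∑ k ∈ univ.erase k', log (μ + δ k) - (#(univ.erase k') * μ * log μ -
          (∑ k ∈ univ.erase k', δ k ^ 2) / (2 * μ))| := by
        rw [← abs_neg, hlog, hcard, hδsq, hμK]
        congr 1
        field_simp
        ring
    _ ≤ (∑ k ∈ univ.erase k', |δ k| ^ 3) / (3 * (1 - ρ) * μ ^ 2) :=
        abs_mul_sum_log_add_sub_le _ hμ0 hρ.2 hbound hδsum
    _ ≤ ((K - 1) * v) ^ ((3 : ℝ) / 2) / (3 * (1 - ρ) ^ 3 * μ ^ 2) := by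
        rw [← hδsq]
        gcongr
        · exact sum_abs_pow_three_le_rpow _ _
        · exact pow_le_of_le_one h1ρ.le (by linarith [hρ.1]) (by norm_num)
    _ = _ := by rw [mul_rpow hK1.le hv0]

/-- Single-sample reliability corollary with adaptive smoothing `ε = μ`:
`|CE − (−log p(k') − (1−p(k'))·log μ + ((K−1)²/(2(1−p(k'))))·v)|
 ≤ (K−1)^(3/2)·v^(3/2) / (3(1−ρ)³μ²)`. -/
theorem adaptive_ce_decomposition (K : ℕ) (hK : 2 ≤ K) (k' : Fin K) (p : Fin K → ℝ)
    (hp : ∀ k, 0 < p k) (hsum : ∑ k, p k = 1) (hlt : p k' < 1)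
    (ρ : ℝ) (hρ : ρ ∈ Set.Ioo (0 : ℝ) 1)
    (μ : ℝ) (hμ : μ = (1 - p k') / ((K : ℝ) - 1))
    (δ : Fin K → ℝ) (hδ : ∀ k, δ k = p k - μ)
    (v : ℝ) (hv : v = (1 / ((K : ℝ) - 1)) * ∑ k ∈ Finset.univ.erase k', δ k ^ 2)
    (hbound : ∀ k ∈ Finset.univ.erase k', |δ k| ≤ ρ * μ) :
    |(-Real.log (p k') - μ * ∑ k ∈ Finset.univ.erase k', Real.log (p k)) -
      (-Real.log (p k') - (1 - p k') * Real.log μ +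
        (((K : ℝ) - 1) ^ 2 / (2 * (1 - p k'))) * v)| ≤
      ((K : ℝ) - 1) ^ ((3 : ℝ) / 2) * v ^ ((3 : ℝ) / 2) /
        (3 * (1 - ρ) ^ 3 * μ ^ 2) :=
  adaptive_ce_decomposition_general K hK k' p hsum hlt ρ hρ μ hμ δ hδ v hv hbound
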